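/- If f ∈ ℬ_Σ(β, λ), i.e., (1−λ)(f(z)/z) + λf'(z) ≺ ((1+z)/(1−z))^β and likewise for f⁻¹, with λ ≥ 1, 0 < β ≤ 1, then |a₃| ≤ 2β/(2λ+1) and |a₃ − a₂²| ≤ 2β/(2λ+1). -/

import Mathlib

/-!
Write the subordination as `(1 - λ) F(z)/z + λ F'(z) = φ(r(z))` with a Schwarz function `r`.
Comparing the coefficients of `z²` gives `(1 + 2λ) a₃ = 2β (c₂ + β c₁²)`, where `c₁, c₂` are the
first Taylor coefficients of `r`. The Schwarz–Pick inequality at the origin, applied to `r(z)/z`,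
gives `|c₂| ≤ 1 - |c₁|²`, hence `|c₂ + β c₁²| ≤ 1` for `0 < β ≤ 1`. The same identity holds for
the inverse `g`, whose third coefficient is `2a₂² - a₃`; subtracting the two identities gives
`(1 + 2λ)(a₃ - a₂²) = β (e - e')`, where `e` and `e'` are the two quantities `c₂ + β c₁²`.
-/

open Complex Metric

noncomputable def coeff (f : ℂ → ℂ) (n : ℕ) : ℂ := iteratedDeriv n f 0 / n.factorial
 
def IsSchwarz (w : ℂ → ℂ) : Prop :=
  AnalyticOnNhd ℂ w (ball 0 1) ∧ w 0 = 0 ∧ ∀ z ∈ ball (0:ℂ) 1, ‖w z‖ < 1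
 
def BiUnivalent (f g : ℂ → ℂ) : Prop :=
  AnalyticOnNhd ℂ f (ball 0 1) ∧ Set.InjOn f (ball 0 1) ∧ f 0 = 0 ∧ deriv f 0 = 1 ∧
  AnalyticOnNhd ℂ g (ball 0 1) ∧ Set.InjOn g (ball 0 1) ∧
  (∀ᶠ z in nhds (0:ℂ), g (f z) = z) ∧ (∀ᶠ w in nhds (0:ℂ), f (g w) = w)

def MemB (lam β : ℝ) (f g : ℂ → ℂ) : Prop :=
  BiUnivalent f g ∧
  (∃ r, IsSchwarz r ∧ ∀ z ∈ ball (0:ℂ) 1, z ≠ 0 →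
    (1 - (lam:ℂ)) * (f z / z) + (lam:ℂ) * deriv f z = ((1 + r z) / (1 - r z)) ^ (β:ℂ)) ∧
  (∃ s, IsSchwarz s ∧ ∀ w ∈ ball (0:ℂ) 1, w ≠ 0 →
    (1 - (lam:ℂ)) * (g w / w) + (lam:ℂ) * deriv g w = ((1 + s w) / (1 - s w)) ^ (β:ℂ))

open Filter Set Topology ComplexConjugate

theorem Filter.EventuallyEq.coeff_eq {f g : ℂ → ℂ} (h : f =ᶠ[𝓝 0] g) (n : ℕ) :
    coeff f n = coeff g n := by
  rw [coeff, coeff, (h.iteratedDeriv n).eq_of_nhds]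

theorem coeff_one (f : ℂ → ℂ) : coeff f 1 = deriv f 0 := by
  simp [coeff]

theorem coeff_id (n : ℕ) : coeff (fun z => z) n = if n = 1 then 1 else 0 := by
  rw [coeff, iteratedDeriv_fun_id_zero]
  split_ifs with h <;> simp [h]

theorem coeff_deriv (f : ℂ → ℂ) (n : ℕ) : coeff (deriv f) n = (n + 1) * coeff f (n + 1) := by
  rw [coeff, coeff, ← iteratedDeriv_succ', Nat.factorial_succ]
  push_cast
  field_simp

theorem coeff_add {f g : ℂ → ℂ} {n : ℕ} (hf : ContDiffAt ℂ n f 0) (hg : ContDiffAt ℂ n g 0) :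
    coeff (fun z => f z + g z) n = coeff f n + coeff g n := by
  rw [coeff, iteratedDeriv_fun_add hf hg, add_div]; rfl

theorem coeff_const_mul (c : ℂ) (f : ℂ → ℂ) (n : ℕ) :
    coeff (fun z => c * f z) n = c * coeff f n := by
  rw [coeff, iteratedDeriv_const_mul_field, mul_div_assoc]; rfl

theorem coeff_id_mul_succ {u : ℂ → ℂ} {n : ℕ} (hu : ContDiffAt ℂ (n + 1 : ℕ) u 0) :
    coeff (fun z => z * u z) (n + 1) = coeff u n := by
  have hsum : iteratedDeriv (n + 1) (fun z => z * u z) 0 = (n + 1) * iteratedDeriv n u 0 := by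
    rw [iteratedDeriv_fun_mul (f := fun z => z) contDiffAt_fun_id hu, Finset.sum_eq_single 1]
    · simp [iteratedDeriv_fun_id_zero]
    · intro i _ hi
      simp [iteratedDeriv_fun_id_zero, hi]
    · simp
  rw [coeff, coeff, hsum, Nat.factorial_succ]
  push_cast
  field_simp

theorem coeff_comp_one {f g : ℂ → ℂ} (hg : DifferentiableAt ℂ g 0) (hf : DifferentiableAt ℂ f 0)
    (hf0 : f 0 = 0) : coeff (g ∘ f) 1 = coeff f 1 * coeff g 1 := by
  rw [← hf0] at hg
  simp only [coeff_one, deriv_comp 0 hg hf, hf0, mul_comm]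

theorem coeff_comp_two {f g : ℂ → ℂ} (hg : ContDiffAt ℂ 2 g 0) (hf : ContDiffAt ℂ 2 f 0)
    (hf0 : f 0 = 0) :
    coeff (g ∘ f) 2 = coeff f 1 ^ 2 * coeff g 2 + coeff f 2 * coeff g 1 := by
  rw [← hf0] at hg
  have h := iteratedDeriv_scomp_two hg hf
  simp only [coeff, h, hf0, smul_eq_mul, iteratedDeriv_one]
  norm_num [Nat.factorial]
  ring

theorem coeff_comp_three {f g : ℂ → ℂ} (hg : ContDiffAt ℂ 3 g 0) (hf : ContDiffAt ℂ 3 f 0)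
    (hf0 : f 0 = 0) :
    coeff (g ∘ f) 3 = coeff f 1 ^ 3 * coeff g 3 + 2 * coeff f 1 * coeff f 2 * coeff g 2
      + coeff f 3 * coeff g 1 := by
  rw [← hf0] at hg
  have h := iteratedDeriv_scomp_three hg hf
  simp only [coeff, h, hf0, smul_eq_mul, nsmul_eq_mul, iteratedDeriv_one]
  norm_num [Nat.factorial]
  ring

theorem coeff_three_of_leftInverse {f g : ℂ → ℂ} (hf : AnalyticAt ℂ f 0) (hg : AnalyticAt ℂ g 0)
    (hf0 : f 0 = 0) (hf1 : deriv f 0 = 1) (hgf : ∀ᶠ z in 𝓝 0, g (f z) = z) :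
    coeff g 3 = 2 * coeff f 2 ^ 2 - coeff f 3 := by
  have hid (n : ℕ) : coeff (g ∘ f) n = coeff (fun z => z) n := Filter.EventuallyEq.coeff_eq hgf n
  have h1 := coeff_comp_one hg.differentiableAt hf.differentiableAt hf0
  have h2 := coeff_comp_two hg.contDiffAt hf.contDiffAt hf0
  have h3 := coeff_comp_three hg.contDiffAt hf.contDiffAt hf0
  simp only [hid, coeff_id, coeff_one f, hf1] at h1 h2 h3
  norm_num at h1 h2 h3
  rw [← h1] at h2 h3
  linear_combination 2 * coeff f 2 * h2 - h3

theorem one_add_mul_coeff_succ_eq {lam : ℂ} {F h : ℂ → ℂ} (n : ℕ) (hF : AnalyticAt ℂ F 0)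
    (hh : AnalyticAt ℂ h 0) (hF0 : F 0 = 0)
    (heq : ∀ᶠ z in 𝓝[≠] 0, (1 - lam) * (F z / z) + lam * deriv F z = h z) :
    (1 + n * lam) * coeff F (n + 1) = coeff h n := by
  have hmul : (fun z => (1 - lam) * F z + lam * (z * deriv F z)) =ᶠ[𝓝 0] fun z => z * h z := by
    filter_upwards [eventually_nhdsWithin_iff.mp heq] with z hz
    rcases eq_or_ne z 0 with rfl | hz0
    · simp [hF0]
    · rw [← hz hz0]
      field_simp
  have hF₁ : AnalyticAt ℂ (fun z => (1 - lam) * F z) 0 := analyticAt_const.mul hF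
  have hF₂ : AnalyticAt ℂ (fun z => lam * (z * deriv F z)) 0 :=
    analyticAt_const.mul (analyticAt_id.mul hF.deriv)
  have hcoeff := hmul.coeff_eq (n + 1)
  rw [coeff_add hF₁.contDiffAt hF₂.contDiffAt, coeff_const_mul,
    coeff_const_mul, coeff_id_mul_succ hF.deriv.contDiffAt, coeff_deriv,
    coeff_id_mul_succ hh.contDiffAt] at hcoeff
  rw [← hcoeff]
  ring

-- The paper's `φ`; it maps the unit disk onto the sector `|arg w| < βπ/2`.
noncomputable def sectorMap (β : ℂ) (w : ℂ) : ℂ := ((1 + w) / (1 - w)) ^ β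

theorem one_add_div_one_sub_mem_slitPlane {w : ℂ} (hw : ‖w‖ < 1) :
    (1 + w) / (1 - w) ∈ slitPlane := by
  have hw1 : 1 - w ≠ 0 := sub_ne_zero.mpr (by rintro rfl; simp at hw)
  have hre : ((1 + w) / (1 - w)).re = (1 - ‖w‖ ^ 2) / normSq (1 - w) := by
    rw [div_re, ← add_div, Complex.sq_norm]
    simp only [normSq_apply, add_re, sub_re, add_im, sub_im, one_re, one_im]
    ring
  refine Or.inl (hre ▸ div_pos ?_ (normSq_pos.mpr hw1))
  nlinarith [norm_nonneg w]

theorem hasDerivAt_sectorMap (β : ℂ) {w : ℂ} (hw : ‖w‖ < 1) :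
    HasDerivAt (sectorMap β) (2 * β * sectorMap β w / (1 - w ^ 2)) w := by
  have hw₁ : 1 - w ≠ 0 := sub_ne_zero.mpr (by rintro rfl; simp at hw)
  have hw₂ : 1 + w ≠ 0 := fun h => by simp [eq_neg_of_add_eq_zero_right h] at hw
  have hcayley : HasDerivAt (fun z : ℂ => (1 + z) / (1 - z)) (2 / (1 - w) ^ 2) w := by
    refine (((hasDerivAt_id' w).const_add 1).fun_div ((hasDerivAt_id' w).const_sub 1)
      hw₁).congr_deriv ?_
    ring
  refine (hcayley.cpow_const (c := β) (one_add_div_one_sub_mem_slitPlane hw)).congr_deriv ?_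
  rw [sectorMap, cpow_sub _ _ (div_ne_zero hw₂ hw₁), cpow_one,
    show 1 - w ^ 2 = (1 - w) * (1 + w) by ring]
  field_simp

theorem sectorMap_zero (β : ℂ) : sectorMap β 0 = 1 := by simp [sectorMap]

theorem analyticAt_sectorMap (β : ℂ) : AnalyticAt ℂ (sectorMap β) 0 := by
  refine AnalyticAt.cpow ?_ analyticAt_const (by simp)
  exact (analyticAt_const.add analyticAt_id).div (analyticAt_const.sub analyticAt_id) (by simp)

theorem coeff_sectorMap_one (β : ℂ) : coeff (sectorMap β) 1 = 2 * β := by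
  rw [coeff_one, (hasDerivAt_sectorMap β (by simp)).deriv, sectorMap_zero]
  ring

theorem coeff_sectorMap_two (β : ℂ) : coeff (sectorMap β) 2 = 2 * β ^ 2 := by
  have hderiv : deriv (sectorMap β) =ᶠ[𝓝 0] fun w => 2 * β * sectorMap β w / (1 - w ^ 2) := by
    filter_upwards [ball_mem_nhds (0 : ℂ) one_pos] with w hw
    exact (hasDerivAt_sectorMap β (mem_ball_zero_iff.mp hw)).deriv
  have h₀ := hasDerivAt_sectorMap β (w := 0) (by simp)
  have h₂ : HasDerivAt (fun w : ℂ => 1 - w ^ 2) (-(2 * 0)) 0 := by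
    simpa using (hasDerivAt_pow 2 (0 : ℂ)).const_sub 1
  have hquot := (h₀.const_mul (2 * β)).fun_div h₂ (by simp)
  rw [coeff, iteratedDeriv_succ, iteratedDeriv_one, hderiv.deriv_eq, hquot.deriv, sectorMap_zero]
  norm_num
  ring

noncomputable def diskMobius (b w : ℂ) : ℂ := (w - b) / (1 - conj b * w)

theorem one_sub_conj_mul_ne_zero {b w : ℂ} (hb : ‖b‖ < 1) (hw : ‖w‖ ≤ 1) :
    1 - conj b * w ≠ 0 := by
  rw [sub_ne_zero]
  intro h
  have : ‖conj b * w‖ < 1 := by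
    rw [norm_mul, norm_conj]
    nlinarith [norm_nonneg b, norm_nonneg w]
  simp [← h] at this

theorem norm_diskMobius_le_one {b w : ℂ} (hb : ‖b‖ < 1) (hw : ‖w‖ ≤ 1) : ‖diskMobius b w‖ ≤ 1 := by
  have hden := one_sub_conj_mul_ne_zero hb hw
  have key : normSq (1 - conj b * w) - normSq (w - b) = (1 - normSq b) * (1 - normSq w) := by
    simp only [normSq_apply, sub_re, sub_im, mul_re, mul_im, one_re, one_im, conj_re, conj_im]
    ring
  have hb' : normSq b < 1 := by rw [← Complex.sq_norm]; nlinarith [norm_nonneg b]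
  have hw' : normSq w ≤ 1 := by rw [← Complex.sq_norm]; nlinarith [norm_nonneg w]
  rw [diskMobius, norm_div, div_le_one (norm_pos_iff.mpr hden), ← sq_le_sq₀ (norm_nonneg _)
    (norm_nonneg _), Complex.sq_norm, Complex.sq_norm]
  nlinarith

theorem diskMobius_self (b : ℂ) : diskMobius b b = 0 := by simp [diskMobius]

theorem hasDerivAt_diskMobius_self {b : ℂ} (hb : ‖b‖ < 1) :
    HasDerivAt (diskMobius b) (1 / (1 - ‖b‖ ^ 2 : ℂ)) b := by
  have hden := one_sub_conj_mul_ne_zero hb hb.le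
  refine (((hasDerivAt_id' b).sub_const b).fun_div
    (((hasDerivAt_id' b).const_mul (conj b)).const_sub 1) hden).congr_deriv ?_
  rw [conj_mul'] at hden ⊢
  field_simp
  ring

theorem norm_deriv_le_one_sub_sq_of_mapsTo {v : ℂ → ℂ} (hv : DifferentiableOn ℂ v (ball 0 1))
    (hmaps : MapsTo v (ball 0 1) (closedBall 0 1)) : ‖deriv v 0‖ ≤ 1 - ‖v 0‖ ^ 2 := by
  have h0 : (0 : ℂ) ∈ ball 0 1 := mem_ball_self one_pos
  have hv1 : ∀ z ∈ ball (0 : ℂ) 1, ‖v z‖ ≤ 1 := fun z hz => mem_closedBall_zero_iff.mp (hmaps hz)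
  rcases (hv1 0 h0).lt_or_eq with hb | hb
  · have hmob : ∀ z ∈ ball (0 : ℂ) 1, DifferentiableAt ℂ (diskMobius (v 0)) (v z) := by
      intro z hz
      exact (differentiableAt_id.sub_const (v 0)).div
        ((differentiableAt_id.const_mul _).const_sub 1) (one_sub_conj_mul_ne_zero hb (hv1 z hz))
    have hcomp : DifferentiableOn ℂ (diskMobius (v 0) ∘ v) (ball 0 1) := fun z hz =>
      ((hmob z hz).comp z (hv.differentiableAt (isOpen_ball.mem_nhds hz))).differentiableWithinAt
    have hschwarz := norm_deriv_le_one_of_mapsTo_ball hcomp (fun z hz => by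
      simpa [diskMobius_self] using norm_diskMobius_le_one hb (hv1 z hz)) one_pos
    rw [deriv_comp 0 (hasDerivAt_diskMobius_self hb).differentiableAt
        (hv.differentiableAt (isOpen_ball.mem_nhds h0)), (hasDerivAt_diskMobius_self hb).deriv,
      norm_mul, norm_div, norm_one] at hschwarz
    have hpos : 0 < 1 - ‖v 0‖ ^ 2 := by nlinarith [norm_nonneg (v 0)]
    rwa [← ofReal_one, ← ofReal_pow, ← ofReal_sub, Complex.norm_of_nonneg hpos.le, one_div,
      inv_mul_le_iff₀ hpos, mul_one] at hschwarz
  · have hmax : IsLocalMax (norm ∘ v) 0 :=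
      Filter.eventually_of_mem (ball_mem_nhds 0 one_pos) fun z hz => by simpa [← hb] using hv1 z hz
    have hconst := Complex.eventually_eq_of_isLocalMax_norm
      (Filter.eventually_of_mem (ball_mem_nhds 0 one_pos) fun z hz =>
        hv.differentiableAt (isOpen_ball.mem_nhds hz)) hmax
    rw [Filter.EventuallyEq.deriv_eq hconst, deriv_const, hb]
    norm_num

theorem IsSchwarz.norm_coeff_two_le {r : ℂ → ℂ} (hr : IsSchwarz r) :
    ‖coeff r 2‖ ≤ 1 - ‖coeff r 1‖ ^ 2 := by
  obtain ⟨hra, hr0, hr1⟩ := hr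
  have hball : ball (0 : ℂ) 1 ∈ 𝓝 0 := ball_mem_nhds 0 one_pos
  have hd : DifferentiableOn ℂ r (ball 0 1) := hra.differentiableOn
  have hv : DifferentiableOn ℂ (dslope r 0) (ball 0 1) := (differentiableOn_dslope hball).mpr hd
  have hmaps : MapsTo (dslope r 0) (ball 0 1) (closedBall 0 1) := fun z hz => by
    simpa using norm_dslope_le_div_of_mapsTo_ball hd
      (fun w hw => by simpa [hr0] using (hr1 w hw).le) hz
  have hrv : r = fun z => z * dslope r 0 z :=
    funext fun z => by simpa [hr0] using (sub_smul_dslope r 0 z).symm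
  have h1 : coeff r 1 = dslope r 0 0 := by rw [coeff_one, dslope_same]
  have h2 : coeff r 2 = deriv (dslope r 0) 0 := by
    rw [congrArg (coeff · 2) hrv, coeff_id_mul_succ (hv.analyticAt hball).contDiffAt, coeff_one]
  rw [h1, h2]
  exact norm_deriv_le_one_sub_sq_of_mapsTo hv hmaps

theorem IsSchwarz.norm_coeff_two_add_mul_sq_le {r : ℂ → ℂ} (hr : IsSchwarz r) {β : ℂ}
    (hβ : ‖β‖ ≤ 1) : ‖coeff r 2 + β * coeff r 1 ^ 2‖ ≤ 1 :=
  calc ‖coeff r 2 + β * coeff r 1 ^ 2‖ ≤ ‖coeff r 2‖ + ‖β‖ * ‖coeff r 1‖ ^ 2 := by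
        rw [← norm_pow, ← norm_mul]; exact norm_add_le _ _
    _ ≤ 1 := by nlinarith [hr.norm_coeff_two_le, sq_nonneg ‖coeff r 1‖]

theorem one_add_two_mul_coeff_three_eq {lam β : ℂ} {F r : ℂ → ℂ}
    (hF : AnalyticOnNhd ℂ F (ball 0 1)) (hF0 : F 0 = 0) (hr : IsSchwarz r)
    (heq : ∀ z ∈ ball (0 : ℂ) 1, z ≠ 0 →
      (1 - lam) * (F z / z) + lam * deriv F z = ((1 + r z) / (1 - r z)) ^ β) :
    (1 + 2 * lam) * coeff F 3 = 2 * β * (coeff r 2 + β * coeff r 1 ^ 2) := by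
  have h0 : (0 : ℂ) ∈ ball 0 1 := mem_ball_self one_pos
  have hr0 : r 0 = 0 := hr.2.1
  have hra : AnalyticAt ℂ r 0 := hr.1 0 h0
  have heq' : ∀ᶠ z in 𝓝[≠] 0, (1 - lam) * (F z / z) + lam * deriv F z = (sectorMap β ∘ r) z :=
    eventually_nhdsWithin_iff.mpr <| Filter.eventually_of_mem (ball_mem_nhds 0 one_pos) heq
  have h := one_add_mul_coeff_succ_eq 2 (hF 0 h0)
    ((analyticAt_sectorMap β).comp_of_eq hra hr0) hF0 heq'
  rw [coeff_comp_two (analyticAt_sectorMap β).contDiffAt hra.contDiffAt hr0, coeff_sectorMap_one,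
    coeff_sectorMap_two] at h
  push_cast at h
  linear_combination h

theorem norm_le_div_of_ofReal_mul_eq {a c : ℝ} {x y : ℂ} (ha : 0 < a) (hc : 0 ≤ c)
    (hy : ‖y‖ ≤ 1) (h : (a : ℂ) * x = c * y) : ‖x‖ ≤ c / a := by
  rw [le_div_iff₀ ha, mul_comm, ← Complex.norm_of_nonneg ha.le, ← norm_mul, h, norm_mul,
    Complex.norm_of_nonneg hc]
  exact mul_le_of_le_one_right hc hy

/-- Bounds for the class ℬ_Σ(β, λ). -/
theorem stmt_18 (lam β : ℝ) (hlam : 1 ≤ lam) (hβ0 : 0 < β) (hβ1 : β ≤ 1)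
    (f g : ℂ → ℂ) (hmem : MemB lam β f g) :
    ‖coeff f 3‖ ≤ 2*β / (2*lam+1) ∧
    ‖coeff f 3 - (coeff f 2)^2‖ ≤ 2*β / (2*lam+1) := by
  obtain ⟨⟨hfa, -, hf0, hf1, hga, -, hgf, -⟩, ⟨r, hr, hfr⟩, ⟨s, hs, hgs⟩⟩ := hmem
  have h0 : (0 : ℂ) ∈ ball 0 1 := mem_ball_self one_pos
  have hg0 : g 0 = 0 := by simpa [hf0] using hgf.self_of_nhds
  have hf3 := one_add_two_mul_coeff_three_eq hfa hf0 hr hfr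
  have hg3 := one_add_two_mul_coeff_three_eq hga hg0 hs hgs
  rw [coeff_three_of_leftInverse (hfa 0 h0) (hga 0 h0) hf0 hf1 hgf] at hg3
  have hβ : ‖(β : ℂ)‖ ≤ 1 := by rwa [Complex.norm_of_nonneg hβ0.le]
  set e := coeff r 2 + β * coeff r 1 ^ 2
  set e' := coeff s 2 + β * coeff s 1 ^ 2
  have he : ‖e‖ ≤ 1 := hr.norm_coeff_two_add_mul_sq_le hβ
  have he' : ‖e'‖ ≤ 1 := hs.norm_coeff_two_add_mul_sq_le hβ
  have hpos : 0 < 2 * lam + 1 := by linarith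
  refine ⟨norm_le_div_of_ofReal_mul_eq hpos (by positivity) he ?_,
    norm_le_div_of_ofReal_mul_eq hpos (by positivity) (y := (e - e') / 2) ?_ ?_⟩
  · push_cast
    linear_combination hf3
  · rw [norm_div, RCLike.norm_ofNat, div_le_one two_pos]
    exact (norm_sub_le _ _).trans (by linarith)
  · push_cast
    linear_combination (hf3 - hg3) / 2
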